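/- Assume f : ℝ → ℝ satisfies (f1)–(f6), and let λ > 0. If {u_n} is a sequence in the nodal Nehari set M such that the sequence {I(u_n)} is bounded, then {u_n} is bounded in H¹(ℝ³). -/

import Mathlib

open MeasureTheory Filter Set Real

noncomputable section

/-- Euclidean space ℝ³. -/
abbrev E3 : Type := EuclideanSpace ℝ (Fin 3)

/-- Membership in the Sobolev space H¹(ℝ³): `u` and its gradient are in L². -/
def MemH1 (u : E3 → ℝ) : Prop :=
  MemLp u 2 (volume : Measure E3) ∧
  MemLp (fun x => ‖gradient u x‖) 2 (volume : Measure E3)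

/-- `u` is a radial function. -/
def Radial (u : E3 → ℝ) : Prop := ∀ x y : E3, ‖x‖ = ‖y‖ → u x = u y

/-- The Newtonian potential φ_u, solving −Δφ = u² in ℝ³. -/
def phiP (u : E3 → ℝ) (x : E3) : ℝ := (1 / (4 * π)) * ∫ y, u y ^ 2 / ‖x - y‖

/-- F(t) = ∫₀ᵗ f(τ) dτ. -/
def Fprim (f : ℝ → ℝ) (t : ℝ) : ℝ := ∫ τ in (0:ℝ)..t, f τ

/-- The energy functional I. -/
def energy (f : ℝ → ℝ) (lam : ℝ) (u : E3 → ℝ) : ℝ :=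
  (1/2) * (∫ x, (‖gradient u x‖ ^ 2 + u x ^ 2)) +
  (lam/4) * (∫ x, phiP u x * u x ^ 2) -
  ∫ x, Fprim f (u x)

/-- The derivative I'(u)[v]. -/
def Iprime (f : ℝ → ℝ) (lam : ℝ) (u v : E3 → ℝ) : ℝ :=
  (∫ x, ((inner ℝ (gradient u x) (gradient v x) : ℝ) + u x * v x)) +
  lam * (∫ x, phiP u x * u x * v x) -
  ∫ x, f (u x) * v x

/-- Positive part u⁺ = max{u,0}. -/
def pPart (u : E3 → ℝ) : E3 → ℝ := fun x => max (u x) 0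

/-- Negative part u⁻ = min{u,0}. -/
def nPart (u : E3 → ℝ) : E3 → ℝ := fun x => min (u x) 0

/-- `u` vanishes almost everywhere (i.e. `u ≡ 0` as an element of H¹). -/
def AeZero (u : E3 → ℝ) : Prop := u =ᵐ[(volume : Measure E3)] (fun _ => (0:ℝ))

/-- The squared H¹ norm. -/
def H1normSq (u : E3 → ℝ) : ℝ := ∫ x, (‖gradient u x‖ ^ 2 + u x ^ 2)

/-- The Nehari set N. -/
def nehari (f : ℝ → ℝ) (lam : ℝ) : Set (E3 → ℝ) :=
  {u | MemH1 u ∧ Radial u ∧ ¬ AeZero u ∧ Iprime f lam u u = 0}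

/-- The nodal Nehari set M. -/
def nodalNehari (f : ℝ → ℝ) (lam : ℝ) : Set (E3 → ℝ) :=
  {u | MemH1 u ∧ Radial u ∧ Iprime f lam u u = 0 ∧ Iprime f lam u (pPart u) = 0 ∧
       ¬ AeZero (pPart u) ∧ ¬ AeZero (nPart u)}

/-- (f1): continuity. -/
def F1 (f : ℝ → ℝ) : Prop := Continuous f

/-- (f2): oddness. -/
def F2 (f : ℝ → ℝ) : Prop := ∀ t : ℝ, f (-t) = - f t

/-- (f3): lim_{t→0} f(t)/t = 0. -/
def F3 (f : ℝ → ℝ) : Prop := Tendsto (fun t => f t / t) (nhdsWithin 0 {(0:ℝ)}ᶜ) (nhds 0)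

/-- (f4): lim_{t→∞} f(t)/t³ = 1 and f(t)/t³ < 1 for t ≠ 0. -/
def F4 (f : ℝ → ℝ) : Prop :=
  Tendsto (fun t => f t / t ^ 3) atTop (nhds 1) ∧ ∀ t : ℝ, t ≠ 0 → f t / t ^ 3 < 1

/-- (f5): t ↦ f(t)/t³ strictly increasing on (0,∞). -/
def F5 (f : ℝ → ℝ) : Prop := StrictMonoOn (fun t => f t / t ^ 3) (Set.Ioi 0)

/-- (f6): f(t)t − 4F(t) → +∞ as t → ∞. -/
def F6 (f : ℝ → ℝ) : Prop := Tendsto (fun t => f t * t - 4 * Fprim f t) atTop atTop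

/-!
On the Nehari set `I'(u)[u] = 0` one has
`I(u) - ¼ I'(u)[u] = ¼ ‖u‖²_{H¹} + ∫ (¼ f(u) u - F(u))`,
and (f5) makes the integrand nonnegative: `f(τ) ≤ (f(t)/t³) τ³` on `[0, t]`, so integrating gives
`4 F(t) ≤ f(t) t`, and oddness transfers this to `t < 0`. Hence `‖u‖²_{H¹} ≤ 4 I(u)`, and a bound on
the energy bounds the `H¹` norm.
-/

namespace F2

variable {f : ℝ → ℝ}

theorem apply_zero (hf2 : F2 f) : f 0 = 0 := by
  have h := hf2 0
  rw [neg_zero] at h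
  linarith

theorem Fprim_neg (hf2 : F2 f) (t : ℝ) : Fprim f (-t) = Fprim f t := by
  have h : (∫ τ in (0:ℝ)..t, f (-τ)) = ∫ τ in (0:ℝ)..t, -f τ :=
    intervalIntegral.integral_congr fun τ _ => hf2 τ
  rw [intervalIntegral.integral_comp_neg, intervalIntegral.integral_neg, neg_zero,
    intervalIntegral.integral_symm] at h
  simpa [Fprim] using h

end F2

variable {f : ℝ → ℝ}

theorem four_mul_Fprim_le_of_nonneg (hf1 : F1 f) (hf2 : F2 f) (hf5 : F5 f) {t : ℝ} (ht : 0 ≤ t) :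
    4 * Fprim f t ≤ f t * t := by
  rcases ht.eq_or_lt with rfl | ht
  · simp [Fprim]
  have hbound : ∀ τ ∈ Icc (0:ℝ) t, f τ ≤ (f t / t ^ 3) * τ ^ 3 := by
    rintro τ ⟨hτ0, hτt⟩
    rcases hτ0.eq_or_lt with rfl | hτ0
    · simp [hf2.apply_zero]
    have hratio : f τ / τ ^ 3 ≤ f t / t ^ 3 := hf5.monotoneOn hτ0 ht hτt
    calc f τ = (f τ / τ ^ 3) * τ ^ 3 := by field_simp
      _ ≤ (f t / t ^ 3) * τ ^ 3 := by gcongr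
  have hle : Fprim f t ≤ ∫ τ in (0:ℝ)..t, (f t / t ^ 3) * τ ^ 3 :=
    intervalIntegral.integral_mono_on ht.le (hf1.intervalIntegrable _ _)
      ((by fun_prop : Continuous fun τ : ℝ => (f t / t ^ 3) * τ ^ 3).intervalIntegrable _ _) hbound
  have hval : (∫ τ in (0:ℝ)..t, (f t / t ^ 3) * τ ^ 3) = f t * t / 4 := by
    rw [intervalIntegral.integral_const_mul, integral_pow]
    field_simp
    ring
  linarith

theorem four_mul_Fprim_le (hf1 : F1 f) (hf2 : F2 f) (hf5 : F5 f) (t : ℝ) :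
    4 * Fprim f t ≤ f t * t := by
  rcases le_total 0 t with ht | ht
  · exact four_mul_Fprim_le_of_nonneg hf1 hf2 hf5 ht
  · have h := four_mul_Fprim_le_of_nonneg hf1 hf2 hf5 (neg_nonneg.mpr ht)
    rw [hf2.Fprim_neg, hf2] at h
    linarith

theorem four_mul_integral_Fprim_le {α : Type*} [MeasurableSpace α] {μ : Measure α}
    (hf1 : F1 f) (hf2 : F2 f) (hf5 : F5 f) {g : α → ℝ}
    (hfg : Integrable (fun x => f (g x) * g x) μ) (hFg : Integrable (fun x => Fprim f (g x)) μ) :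
    4 * ∫ x, Fprim f (g x) ∂μ ≤ ∫ x, f (g x) * g x ∂μ := by
  rw [← integral_const_mul]
  exact integral_mono (hFg.const_mul 4) hfg fun x => four_mul_Fprim_le hf1 hf2 hf5 (g x)

theorem H1normSq_nonneg (u : E3 → ℝ) : 0 ≤ H1normSq u :=
  integral_nonneg fun _ => by positivity

theorem integral_phiP_mul_sq_nonneg (u : E3 → ℝ) : 0 ≤ ∫ x, phiP u x * u x ^ 2 :=
  integral_nonneg fun x =>
    mul_nonneg (mul_nonneg (by positivity) (integral_nonneg fun _ => by positivity)) (sq_nonneg _)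

theorem Iprime_self (lam : ℝ) (u : E3 → ℝ) :
    Iprime f lam u u =
      H1normSq u + lam * (∫ x, phiP u x * u x ^ 2) - ∫ x, f (u x) * u x := by
  simp only [Iprime, H1normSq, real_inner_self_eq_norm_sq, ← sq, mul_assoc]

theorem H1normSq_le_four_mul_abs_energy (hf1 : F1 f) (hf2 : F2 f) (hf5 : F5 f) {lam : ℝ}
    (hlam : 0 ≤ lam) {u : E3 → ℝ} (hu : Iprime f lam u u = 0) :
    H1normSq u ≤ 4 * |energy f lam u| := by
  have hP : 0 ≤ lam * ∫ x, phiP u x * u x ^ 2 := mul_nonneg hlam (integral_phiP_mul_sq_nonneg u)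
  have hH := H1normSq_nonneg u
  have hnehari := Iprime_self lam u ▸ hu
  have henergy : energy f lam u = H1normSq u / 2 + lam / 4 * (∫ x, phiP u x * u x ^ 2) -
      ∫ x, Fprim f (u x) := by
    simp only [energy, H1normSq]
    ring
  -- a non-integrable integrand has Bochner integral `0`, which the case split has to absorb
  by_cases hfu : Integrable (fun x => f (u x) * u x)
  · have hF : 4 * ∫ x, Fprim f (u x) ≤ ∫ x, f (u x) * u x := by
      by_cases hFu : Integrable (fun x => Fprim f (u x))
      · exact four_mul_integral_Fprim_le hf1 hf2 hf5 hfu hFu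
      · rw [integral_undef hFu]
        linarith
    have := le_abs_self (energy f lam u)
    linarith
  · rw [integral_undef hfu] at hnehari
    linarith [abs_nonneg (energy f lam u)]

theorem stmt17_general (f : ℝ → ℝ) (hf1 : F1 f) (hf2 : F2 f)
    (hf5 : F5 f) (lam : ℝ) (hlam : 0 < lam)
    (u : ℕ → E3 → ℝ) (hun : ∀ n : ℕ, u n ∈ nodalNehari f lam)
    (hbdd : ∃ C : ℝ, ∀ n : ℕ, |energy f lam (u n)| ≤ C) :
    ∃ C : ℝ, ∀ n : ℕ, H1normSq (u n) ≤ C := by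
  obtain ⟨C, hC⟩ := hbdd
  refine ⟨4 * C, fun n => ?_⟩
  calc H1normSq (u n) ≤ 4 * |energy f lam (u n)| :=
        H1normSq_le_four_mul_abs_energy hf1 hf2 hf5 hlam.le (hun n).2.2.1
    _ ≤ 4 * C := by linarith [hC n]

/-- a sequence in M with bounded energy is bounded in H¹. -/
theorem stmt17 (f : ℝ → ℝ) (hf1 : F1 f) (hf2 : F2 f) (hf3 : F3 f) (hf4 : F4 f)
    (hf5 : F5 f) (hf6 : F6 f) (lam : ℝ) (hlam : 0 < lam)
    (u : ℕ → E3 → ℝ) (hun : ∀ n : ℕ, u n ∈ nodalNehari f lam)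
    (hbdd : ∃ C : ℝ, ∀ n : ℕ, |energy f lam (u n)| ≤ C) :
    ∃ C : ℝ, ∀ n : ℕ, H1normSq (u n) ≤ C :=
  stmt17_general f hf1 hf2 hf5 lam hlam u hun hbdd
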